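/- Let X, Y be normed spaces, T : X × Y → X continuous such that for every y ∈ Y there is a unique fixed point x(y) satisfying x(y) = T(x(y), y), the map y ↦ x(y) is continuous with x(0) = 0, and ‖T(x,y)‖ ≤ C(‖x‖^k + ‖y‖^k) for some k ≥ 2 and constant C. Then for all y of sufficiently small norm, ‖x(y)‖ ≤ 2C‖y‖^k. -/

import Mathlib

/-!
Along the fixed points, `‖x(y)‖ ≤ C‖x(y)‖^k + C‖y‖^k`. Since `x` is continuous with `x(0) = 0`
and `k ≥ 2`, the factor `C‖x(y)‖^(k-1)` is at most `1/2` for small `y`, so the term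
`C‖x(y)‖^k` can be absorbed into the left-hand side.
-/

open Filter Topology

theorem eventually_le_two_mul_of_le_mul_pow_add {α : Type*} {l : Filter α} {a b : α → ℝ}
    {C : ℝ} {k : ℕ} (hk : 2 ≤ k) (ha : Tendsto a l (𝓝 0)) (ha0 : ∀ t, 0 ≤ a t)
    (h : ∀ t, a t ≤ C * (a t ^ k + b t)) :
    ∀ᶠ t in l, a t ≤ 2 * C * b t := by
  obtain ⟨n, rfl⟩ : ∃ n, k = n + 1 := ⟨k - 1, by omega⟩
  have hsmall : ∀ᶠ t in l, C * a t ^ n ≤ 1 / 2 := by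
    have : Tendsto (fun t => C * a t ^ n) l (𝓝 0) := by
      simpa [zero_pow (by omega : n ≠ 0)] using (ha.pow n).const_mul C
    exact this.eventually (ge_mem_nhds (by norm_num))
  filter_upwards [hsmall] with t ht
  have habsorb : C * a t ^ (n + 1) ≤ a t / 2 :=
    calc C * a t ^ (n + 1) = C * a t ^ n * a t := by ring
      _ ≤ 1 / 2 * a t := mul_le_mul_of_nonneg_right ht (ha0 t)
      _ = a t / 2 := by ring
  linarith [h t]

theorem stmt_4_general {X Y : Type*} [NormedAddCommGroup X]
    [NormedAddCommGroup Y]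
    (T : X × Y → X)
    (x : Y → X) (hfix : ∀ y, x y = T (x y, y))
    (hxcont : Continuous x) (hx0 : x 0 = 0)
    (k : ℕ) (hk : 2 ≤ k) (C : ℝ)
    (hbound : ∀ p : X × Y, ‖T p‖ ≤ C * (‖p.1‖ ^ k + ‖p.2‖ ^ k)) :
    ∃ δ > 0, ∀ y : Y, ‖y‖ ≤ δ → ‖x y‖ ≤ 2 * C * ‖y‖ ^ k := by
  have hsmall : Tendsto (fun y => ‖x y‖) (𝓝 0) (𝓝 0) := by
    simpa [hx0] using hxcont.norm.tendsto 0
  have hrec : ∀ y, ‖x y‖ ≤ C * (‖x y‖ ^ k + ‖y‖ ^ k) := fun y => by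
    simpa only [← hfix y] using hbound (x y, y)
  obtain ⟨δ, hδ, hbound_near⟩ := Metric.nhds_basis_closedBall.eventually_iff.1
    (eventually_le_two_mul_of_le_mul_pow_add hk hsmall (fun _ => norm_nonneg _) hrec)
  exact ⟨δ, hδ, fun y hy => hbound_near (mem_closedBall_zero_iff.2 hy)⟩

/-- Bounds on implicit functions: if `T : X × Y → X` is continuous, `x(y)` is the unique
fixed point of `T(·, y)`, the fixed-point map is continuous with `x(0) = 0`, and
`‖T(x,y)‖ ≤ C(‖x‖^k + ‖y‖^k)`, then `‖x(y)‖ ≤ 2C‖y‖^k` for all `y` of small norm. -/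
theorem stmt_4 {X Y : Type*} [NormedAddCommGroup X] [NormedSpace ℝ X]
    [NormedAddCommGroup Y] [NormedSpace ℝ Y]
    (T : X × Y → X) (hT : Continuous T)
    (x : Y → X) (hfix : ∀ y, x y = T (x y, y))
    (huniq : ∀ y z, z = T (z, y) → z = x y)
    (hxcont : Continuous x) (hx0 : x 0 = 0)
    (k : ℕ) (hk : 2 ≤ k) (C : ℝ) (hC : 0 < C)
    (hbound : ∀ p : X × Y, ‖T p‖ ≤ C * (‖p.1‖ ^ k + ‖p.2‖ ^ k)) :
    ∃ δ > 0, ∀ y : Y, ‖y‖ ≤ δ → ‖x y‖ ≤ 2 * C * ‖y‖ ^ k :=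
  stmt_4_general T x hfix hxcont hx0 k hk C hbound
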